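/- Suppose λ_k > λ_{k+1} and δ lies in W_1 = span{ξ_1, ..., ξ_k}. Then ||U^T β||_0 ≤ k; moreover, if in addition δ ≠ 0, then ||U^T β||_1 / ||U^T β||_2 ≤ √k. (Theorem 2, first part) -/
import Mathlib


open Matrix

lemma sparse_l1_div_l2 {n : ℕ} (x : Fin n → ℝ) (k : ℕ)
    (h : (Finset.univ.filter fun i => x i ≠ 0).card ≤ k) :
    (∑ i, |x i|) / Real.sqrt (∑ i, x i ^ 2) ≤ Real.sqrt k := by
  set s := Finset.univ.filter fun i => x i ≠ 0 with hs
  have h1 : ∑ i, |x i| = ∑ i ∈ s, |x i| := by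
    refine (Finset.sum_subset (Finset.subset_univ s) ?_).symm
    intro i _ hi
    simp [hs] at hi
    simp [hi]
  have h2 : ∑ i, x i ^ 2 = ∑ i ∈ s, x i ^ 2 := by
    refine (Finset.sum_subset (Finset.subset_univ s) ?_).symm
    intro i _ hi
    simp [hs] at hi
    simp [hi]
  have hnn : (0:ℝ) ≤ ∑ i, x i ^ 2 := Finset.sum_nonneg fun i _ => sq_nonneg _
  rcases eq_or_lt_of_le hnn with h0 | h0
  · have : ∀ i, x i = 0 := by
      intro i
      have := Finset.sum_eq_zero_iff_of_nonneg (fun i (_ : i ∈ Finset.univ) => sq_nonneg (x i)) |>.mp h0.symm i (Finset.mem_univ i)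
      exact pow_eq_zero_iff (two_ne_zero) |>.mp this
    simp [this]
  · rw [div_le_iff₀ (Real.sqrt_pos.mpr h0)]
    have cs := Finset.sum_mul_sq_le_sq_mul_sq s (fun _ => (1:ℝ)) (fun i => |x i|)
    simp only [one_mul, one_pow, sq_abs, Finset.sum_const, nsmul_eq_mul, mul_one] at cs
    have hcard : (s.card : ℝ) ≤ (k : ℝ) := by exact_mod_cast h
    have : (∑ i ∈ s, |x i|) ^ 2 ≤ (k : ℝ) * ∑ i, x i ^ 2 := by
      rw [h2]
      refine cs.trans ?_
      apply mul_le_mul_of_nonneg_right hcard (Finset.sum_nonneg fun i _ => sq_nonneg _)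
    have hl : ∑ i, |x i| = Real.sqrt ((∑ i ∈ s, |x i|) ^ 2) := by
      rw [h1, Real.sqrt_sq (Finset.sum_nonneg fun i _ => abs_nonneg _)]
    rw [hl]
    calc Real.sqrt ((∑ i ∈ s, |x i|) ^ 2) ≤ Real.sqrt ((k:ℝ) * ∑ i, x i ^ 2) := Real.sqrt_le_sqrt this
      _ = Real.sqrt k * Real.sqrt (∑ i, x i ^ 2) := Real.sqrt_mul (Nat.cast_nonneg k) _

lemma card_le_of_orthonormal {k : ℕ} {ι : Type*} [Fintype ι] [DecidableEq ι] (A : Finset ι)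
    (v : ι → Fin k → ℝ)
    (hv : ∀ i ∈ A, ∀ i' ∈ A, ∑ m, v i m * v i' m = if i = i' then (1:ℝ) else 0) :
    A.card ≤ k := by
  have hli : LinearIndependent ℝ (fun i : {i // i ∈ A} => v i.1) := by
    rw [Fintype.linearIndependent_iff]
    intro g hg i0
    have := congrArg (fun w => ∑ m, w m * v i0.1 m) hg
    simp only [Finset.sum_apply, Pi.smul_apply, smul_eq_mul, Pi.zero_apply, zero_mul,
      Finset.sum_mul, Finset.sum_const_zero] at this
    rw [Finset.sum_comm] at this
    have h2 : ∀ i : {i // i ∈ A}, ∑ m, g i * v i.1 m * v i0.1 m = if i = i0 then g i else 0 := by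
      intro i
      simp only [mul_assoc, ← Finset.mul_sum, hv i.1 i.2 i0.1 i0.2]
      by_cases h : i = i0
      · simp [h]
      · have : i.1 ≠ i0.1 := fun hh => h (Subtype.ext hh)
        simp [h, this]
    rw [Finset.sum_congr rfl (fun i _ => h2 i)] at this
    simpa using this
  have := hli.fintype_card_le_finrank
  simpa [Module.finrank_fintype_fun_eq_card] using this

lemma sum_filter_lt_eq {p k : ℕ} (hkp : k < p) (f : Fin p → ℝ) :
    ∑ j ∈ Finset.univ.filter (fun j : Fin p => j.1 < k), f j
      = ∑ m : Fin k, f ⟨m.1, lt_trans m.2 hkp⟩ := by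
  refine Finset.sum_bij' (fun j hj => (⟨j.1, by simpa using hj⟩ : Fin k))
    (fun m _ => (⟨m.1, lt_trans m.2 hkp⟩ : Fin p)) ?_ ?_ ?_ ?_ ?_
  · intro a ha; exact Finset.mem_univ _
  · intro a _; simp
  · intro a ha; rfl
  · intro a ha; rfl
  · intro a ha; rfl

/-- Theorem 2 (first part): if `λ_k > λ_{k+1}` and `δ ∈ W₁ = span{ξ_1, ..., ξ_k}`,
then `‖Uᵀβ‖₀ ≤ k`, and if moreover `δ ≠ 0` then `‖Uᵀβ‖₁/‖Uᵀβ‖₂ ≤ √k`. -/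
theorem rotation_sparsity_delta_in_W1
    {p k : ℕ} (hk : 1 ≤ k) (hkp : k < p)
    (S : Matrix (Fin p) (Fin p) ℝ) (hS : S.IsSymm)
    (lam : Fin p → ℝ) (xi : Fin p → (Fin p → ℝ))
    (hpos : ∀ j, 0 < lam j)
    (hdesc : ∀ i j : Fin p, i ≤ j → lam j ≤ lam i)
    (horth : ∀ i j : Fin p, xi i ⬝ᵥ xi j = if i = j then (1 : ℝ) else 0)
    (heig : ∀ j, S.mulVec (xi j) = lam j • xi j)
    (δ : Fin p → ℝ) (ρ : ℝ) (hρ : 0 < ρ)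
    (U : Matrix (Fin p) (Fin p) ℝ) (hU : Uᵀ * U = 1)
    (η : Fin p → ℝ) (hηdesc : ∀ i j : Fin p, i ≤ j → η j ≤ η i)
    (hdiag : Uᵀ * (S + ρ • vecMulVec δ δ) * U = Matrix.diagonal η)
    -- eigengap λ_k > λ_{k+1}
    (hgap : lam ⟨k, hkp⟩ < lam ⟨k - 1, by omega⟩)
    -- δ lies in the span of the top k eigenvectors
    (hmem : δ ∈ Submodule.span ℝ
      (Set.range fun i : Fin k => xi ⟨i.1, lt_trans i.isLt hkp⟩)) :
    (Finset.univ.filter fun i => (Uᵀ).mulVec (S⁻¹.mulVec δ) i ≠ 0).card ≤ k ∧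
      (δ ≠ 0 →
        (∑ i, |(Uᵀ).mulVec (S⁻¹.mulVec δ) i|) /
            Real.sqrt (∑ i, ((Uᵀ).mulVec (S⁻¹.mulVec δ) i) ^ 2) ≤
          Real.sqrt k) := by
  classical
  set M : Matrix (Fin p) (Fin p) ℝ := S + ρ • vecMulVec δ δ with hM
  set Ξ : Matrix (Fin p) (Fin p) ℝ := Matrix.of (fun a j => xi j a) with hΞ
  -- orthogonality of Ξ
  have hXt : Ξᵀ * Ξ = 1 := by
    ext i j
    have := horth i j
    simpa [Matrix.mul_apply, dotProduct, Matrix.one_apply, hΞ] using this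
  have hXX : Ξ * Ξᵀ = 1 := mul_eq_one_comm.mp hXt
  have hXtv : ∀ (v : Fin p → ℝ) (j : Fin p), Ξᵀ.mulVec v j = xi j ⬝ᵥ v := by
    intro v j; rfl
  -- Parseval
  have hpar : ∀ u v : Fin p → ℝ, u ⬝ᵥ v = ∑ j, (xi j ⬝ᵥ u) * (xi j ⬝ᵥ v) := by
    intro u v
    conv_lhs => rw [← Matrix.one_mulVec v, ← hXX, ← Matrix.mulVec_mulVec]
    rw [Matrix.dotProduct_mulVec, ← Matrix.mulVec_transpose]
    exact Finset.sum_congr rfl fun j _ => by rw [hXtv, hXtv]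
  -- dot products with combinations of eigenvectors
  have hdotsum : ∀ (G : Finset (Fin p)) (coef : Fin p → ℝ) (v : Fin p → ℝ),
      (fun b => ∑ j ∈ G, coef j * xi j b) ⬝ᵥ v = ∑ j ∈ G, coef j * (xi j ⬝ᵥ v) := by
    intro G coef v
    simp only [dotProduct, Finset.sum_mul]
    rw [Finset.sum_comm]
    refine Finset.sum_congr rfl fun j _ => ?_
    rw [Finset.mul_sum]
    exact Finset.sum_congr rfl fun b _ => by ring
  -- inverse of S
  have hSX : S * Ξ = Ξ * Matrix.diagonal lam := by
    ext a j
    have := congrFun (heig j) a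
    simp only [Matrix.mul_apply, Matrix.mulVec, dotProduct, Pi.smul_apply, smul_eq_mul] at this ⊢
    rw [show ∑ b, S a b * Ξ b j = ∑ b, S a b * xi j b from rfl]
    rw [this]
    rw [Finset.sum_eq_single j]
    · simp [hΞ, Matrix.diagonal, mul_comm]
    · intro b _ hb; simp [Matrix.diagonal, hb]
    · intro h; exact absurd (Finset.mem_univ j) h
  have hST : S * (Ξ * Matrix.diagonal (fun j => (lam j)⁻¹) * Ξᵀ) = 1 := by
    rw [← Matrix.mul_assoc, ← Matrix.mul_assoc, hSX, Matrix.mul_assoc Ξ,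
      Matrix.diagonal_mul_diagonal]
    have : (fun j => lam j * (lam j)⁻¹) = fun _ => (1:ℝ) := by
      funext j; exact mul_inv_cancel₀ (ne_of_gt (hpos j))
    rw [this, Matrix.diagonal_one, Matrix.mul_one, hXX]
  have hSinv : S⁻¹ = Ξ * Matrix.diagonal (fun j => (lam j)⁻¹) * Ξᵀ :=
    Matrix.inv_eq_right_inv hST
  set β : Fin p → ℝ := S⁻¹.mulVec δ with hβ
  -- coordinates of β
  have hXiΞ : ∀ (w : Fin p → ℝ) (j : Fin p), xi j ⬝ᵥ (Ξ.mulVec w) = w j := by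
    intro w j
    rw [Matrix.dotProduct_mulVec, ← Matrix.mulVec_transpose]
    have h1 : Ξᵀ.mulVec (xi j) = fun m => if m = j then (1:ℝ) else 0 := by
      funext m; rw [hXtv]; exact horth m j
    rw [h1]
    simp [dotProduct, ite_mul, one_mul, zero_mul, Finset.sum_ite_eq']
  have hβcoord : ∀ j : Fin p, xi j ⬝ᵥ β = (lam j)⁻¹ * (xi j ⬝ᵥ δ) := by
    intro j
    rw [hβ, hSinv, ← Matrix.mulVec_mulVec, ← Matrix.mulVec_mulVec, hXiΞ,
      Matrix.mulVec_diagonal, hXtv]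
  -- δ coefficients vanish beyond k
  obtain ⟨c, hc⟩ := (Submodule.mem_span_range_iff_exists_fun ℝ).mp hmem
  have hδ0 : ∀ j : Fin p, k ≤ j.1 → xi j ⬝ᵥ δ = 0 := by
    intro j hj
    rw [← hc]
    have h1 : xi j ⬝ᵥ (∑ i : Fin k, c i • xi ⟨i.1, lt_trans i.isLt hkp⟩)
        = ∑ i : Fin k, c i * (xi j ⬝ᵥ xi ⟨i.1, lt_trans i.isLt hkp⟩) := by
      simp only [dotProduct, Finset.sum_apply, Pi.smul_apply, smul_eq_mul, Finset.mul_sum]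
      rw [Finset.sum_comm]
      exact Finset.sum_congr rfl fun i _ => Finset.sum_congr rfl fun a _ => by ring
    rw [h1]
    apply Finset.sum_eq_zero
    intro i _
    have hne : j ≠ (⟨i.1, lt_trans i.isLt hkp⟩ : Fin p) := by
      intro h
      have : j.1 = i.1 := by rw [h]
      omega
    rw [horth]
    simp [hne]
  have hβ0 : ∀ j : Fin p, k ≤ j.1 → xi j ⬝ᵥ β = 0 := by
    intro j hj
    rw [hβcoord, hδ0 j hj, mul_zero]
  -- eigen-equation for columns of U
  have hUUt : U * Uᵀ = 1 := mul_eq_one_comm.mp hU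
  have hMU : M * U = U * Matrix.diagonal η := by
    rw [← hdiag, ← Matrix.mul_assoc, ← Matrix.mul_assoc, hUUt, Matrix.one_mul]
  have hMu : ∀ i, M.mulVec (fun a => U a i) = fun a => η i * U a i := by
    intro i
    funext a
    have h0 := congrFun (congrFun hMU a) i
    simp only [Matrix.mul_apply] at h0
    have h2 : ∑ j, U a j * Matrix.diagonal η j i = U a i * η i := by
      rw [Finset.sum_eq_single i]
      · rw [Matrix.diagonal_apply_eq]
      · intro b _ hb; rw [Matrix.diagonal_apply_ne η hb, mul_zero]
      · intro h; exact absurd (Finset.mem_univ i) h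
    simp only [Matrix.mulVec, dotProduct]
    rw [h0, h2, mul_comm]
  -- symmetry of M
  have hvv : (vecMulVec δ δ)ᵀ = vecMulVec δ δ := by
    ext a b
    simp [Matrix.vecMulVec_apply, Matrix.transpose_apply, mul_comm]
  have hMsymm : Mᵀ = M := by
    rw [hM, Matrix.transpose_add, Matrix.transpose_smul, hvv, hS.eq]
  have hsym : ∀ u v : Fin p → ℝ, (M.mulVec u) ⬝ᵥ v = u ⬝ᵥ (M.mulVec v) := by
    intro u v
    rw [Matrix.dotProduct_mulVec, ← Matrix.mulVec_transpose, hMsymm]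
  -- M xi j = lam j xi j for j ≥ k
  have hvmv : ∀ v : Fin p → ℝ, (vecMulVec δ δ).mulVec v = (δ ⬝ᵥ v) • δ := by
    intro v
    funext a
    simp only [Matrix.mulVec, dotProduct, Matrix.vecMulVec_apply, Pi.smul_apply, smul_eq_mul]
    rw [Finset.sum_mul]
    symm
    exact Finset.sum_congr rfl fun b _ => by ring
  have hMxi : ∀ j : Fin p, k ≤ j.1 → M.mulVec (xi j) = lam j • xi j := by
    intro j hj
    rw [hM, Matrix.add_mulVec, Matrix.smul_mulVec, hvmv, heig]
    have : δ ⬝ᵥ xi j = 0 := by rw [dotProduct_comm]; exact hδ0 j hj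
    rw [this, zero_smul, smul_zero, add_zero]
  -- key scalar identity
  have hkey : ∀ (i : Fin p) (j : Fin p), k ≤ j.1 →
      (η i - lam j) * (xi j ⬝ᵥ (fun a => U a i)) = 0 := by
    intro i j hj
    have h1 : (M.mulVec (xi j)) ⬝ᵥ (fun a => U a i) = xi j ⬝ᵥ (M.mulVec (fun a => U a i)) :=
      hsym _ _
    rw [hMxi j hj, hMu i] at h1
    have hL : (lam j • xi j) ⬝ᵥ (fun a => U a i) = lam j * (xi j ⬝ᵥ fun a => U a i) := by
      simp [smul_dotProduct]
    have hR : xi j ⬝ᵥ (fun a => η i * U a i) = η i * (xi j ⬝ᵥ fun a => U a i) := by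
      simp only [dotProduct, Finset.mul_sum]
      exact Finset.sum_congr rfl fun a _ => by ring
    rw [hL, hR] at h1
    rw [sub_mul, h1, sub_self]
  -- dichotomy
  have hdich : ∀ i : Fin p,
      (∀ j : Fin p, j.1 < k → xi j ⬝ᵥ (fun a => U a i) = 0) ∨
      (∀ j : Fin p, k ≤ j.1 → xi j ⬝ᵥ (fun a => U a i) = 0) := by
    intro i
    by_cases hcase : ∀ j : Fin p, k ≤ j.1 → xi j ⬝ᵥ (fun a => U a i) = 0
    · exact Or.inr hcase
    left
    push_neg at hcase
    obtain ⟨j0, hj0k, hj0⟩ := hcase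
    have hηi : η i = lam j0 := by
      have := hkey i j0 hj0k
      rcases mul_eq_zero.mp this with h | h
      · linarith [sub_eq_zero.mp h]
      · exact absurd h hj0
    have hηle : η i ≤ lam ⟨k, hkp⟩ := by
      rw [hηi]
      exact hdesc ⟨k, hkp⟩ j0 (by rw [Fin.le_def]; exact hj0k)
    -- quadratic form argument
    set F : Finset (Fin p) := Finset.univ.filter (fun j : Fin p => j.1 < k) with hF
    set u : Fin p → ℝ := fun a => U a i with hu
    set w : Fin p → ℝ := fun b => ∑ j ∈ F, (xi j ⬝ᵥ u) * xi j b with hw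
    set Q : ℝ := ∑ j ∈ F, (xi j ⬝ᵥ u) ^ 2 with hQ
    have hwdot : ∀ v : Fin p → ℝ, w ⬝ᵥ v = ∑ j ∈ F, (xi j ⬝ᵥ u) * (xi j ⬝ᵥ v) := by
      intro v
      rw [hw]
      exact hdotsum F (fun j => xi j ⬝ᵥ u) v
    have hwcoord : ∀ m : Fin p, xi m ⬝ᵥ w = if m ∈ F then xi m ⬝ᵥ u else 0 := by
      intro m
      rw [dotProduct_comm, hwdot (xi m)]
      rw [Finset.sum_congr rfl fun j (_ : j ∈ F) => by rw [horth j m]]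
      simp only [mul_ite, mul_one, mul_zero]
      rw [Finset.sum_ite_eq' F m (fun j => xi j ⬝ᵥ u)]
    have hwu : w ⬝ᵥ u = Q := by
      rw [hwdot u, hQ]
      exact Finset.sum_congr rfl fun j _ => (sq (xi j ⬝ᵥ u)).symm ▸ (sq (xi j ⬝ᵥ u)) ▸ by ring
    have hδw : δ ⬝ᵥ u = δ ⬝ᵥ w := by
      rw [hpar δ u, hpar δ w]
      apply Finset.sum_congr rfl
      intro j _
      by_cases hjF : j ∈ F
      · rw [hwcoord j, if_pos hjF]
      · have hjk : k ≤ j.1 := by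
          simp only [hF, Finset.mem_filter, Finset.mem_univ, true_and] at hjF
          omega
        rw [hδ0 j hjk, zero_mul, zero_mul]
    have hwMu : w ⬝ᵥ (M.mulVec u) = η i * Q := by
      rw [hMu i]
      have : w ⬝ᵥ (fun a => η i * u a) = η i * (w ⬝ᵥ u) := by
        simp only [dotProduct, Finset.mul_sum]
        exact Finset.sum_congr rfl fun a _ => by ring
      rw [show (fun a => η i * U a i) = (fun a => η i * u a) from rfl, this, hwu]
    have hSw : (S.mulVec w) ⬝ᵥ u = ∑ j ∈ F, lam j * (xi j ⬝ᵥ u) ^ 2 := by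
      have hb : ∀ (j : Fin p) (b : Fin p), ∑ cc, S b cc * xi j cc = lam j * xi j b := by
        intro j b
        have := congrFun (heig j) b
        simpa [Matrix.mulVec, dotProduct] using this
      have h1 : S.mulVec w = fun b => ∑ j ∈ F, ((xi j ⬝ᵥ u) * lam j) * xi j b := by
        funext b
        calc S.mulVec w b = ∑ cc, S b cc * ∑ j ∈ F, (xi j ⬝ᵥ u) * xi j cc := rfl
          _ = ∑ cc, ∑ j ∈ F, S b cc * ((xi j ⬝ᵥ u) * xi j cc) := by
              exact Finset.sum_congr rfl fun cc _ => Finset.mul_sum _ _ _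
          _ = ∑ j ∈ F, ∑ cc, S b cc * ((xi j ⬝ᵥ u) * xi j cc) := Finset.sum_comm
          _ = ∑ j ∈ F, (xi j ⬝ᵥ u) * ∑ cc, S b cc * xi j cc := by
              refine Finset.sum_congr rfl fun j _ => ?_
              rw [Finset.mul_sum]
              exact Finset.sum_congr rfl fun cc _ => by ring
          _ = ∑ j ∈ F, ((xi j ⬝ᵥ u) * lam j) * xi j b := by
              refine Finset.sum_congr rfl fun j _ => ?_
              rw [hb j b]; ring
      rw [h1, hdotsum F (fun j => (xi j ⬝ᵥ u) * lam j) u]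
      exact Finset.sum_congr rfl fun j _ => by ring
    have hMw : (M.mulVec w) ⬝ᵥ u = (∑ j ∈ F, lam j * (xi j ⬝ᵥ u) ^ 2) + ρ * (δ ⬝ᵥ w) ^ 2 := by
      rw [hM, Matrix.add_mulVec, Matrix.smul_mulVec, hvmv, add_dotProduct, hSw]
      congr 1
      simp only [smul_dotProduct, smul_eq_mul]
      rw [← hδw]
      rw [hδw]
      ring
    have hmain : η i * Q = (∑ j ∈ F, lam j * (xi j ⬝ᵥ u) ^ 2) + ρ * (δ ⬝ᵥ w) ^ 2 := by
      calc η i * Q = w ⬝ᵥ (M.mulVec u) := hwMu.symm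
        _ = (M.mulVec w) ⬝ᵥ u := (hsym w u).symm
        _ = _ := hMw
    have hlow : lam ⟨k - 1, by omega⟩ * Q ≤ ∑ j ∈ F, lam j * (xi j ⬝ᵥ u) ^ 2 := by
      rw [hQ, Finset.mul_sum]
      apply Finset.sum_le_sum
      intro j hj
      have hjk : j.1 < k := by
        simp only [hF, Finset.mem_filter, Finset.mem_univ, true_and] at hj
        exact hj
      have : lam ⟨k - 1, by omega⟩ ≤ lam j := by
        apply hdesc
        rw [Fin.le_def]
        simp
        omega
      exact mul_le_mul_of_nonneg_right this (sq_nonneg _)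
    have hQnn : 0 ≤ Q := Finset.sum_nonneg fun j _ => sq_nonneg _
    have hQ0 : Q = 0 := by
      by_contra hQne
      have hQpos : 0 < Q := lt_of_le_of_ne hQnn (Ne.symm hQne)
      have h1 : lam ⟨k - 1, by omega⟩ * Q ≤ η i * Q := by
        rw [hmain]
        have : 0 ≤ ρ * (δ ⬝ᵥ w) ^ 2 := mul_nonneg (le_of_lt hρ) (sq_nonneg _)
        linarith
      have h2 : lam ⟨k - 1, by omega⟩ ≤ η i := le_of_mul_le_mul_right h1 hQpos
      have h3 : η i < lam ⟨k - 1, by omega⟩ := lt_of_le_of_lt hηle hgap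
      linarith
    intro j hjk
    have hjF : j ∈ F := by simp [hF, hjk]
    have := Finset.sum_eq_zero_iff_of_nonneg (fun j (_ : j ∈ F) => sq_nonneg (xi j ⬝ᵥ u)) |>.mp hQ0 j hjF
    exact pow_eq_zero_iff two_ne_zero |>.mp this
  -- the support bound
  have hxval : ∀ i, (Uᵀ).mulVec β i = ∑ j, (xi j ⬝ᵥ (fun a => U a i)) * (xi j ⬝ᵥ β) := by
    intro i
    rw [show (Uᵀ).mulVec β i = (fun a => U a i) ⬝ᵥ β from rfl]
    exact hpar _ _
  set A : Finset (Fin p) :=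
    Finset.univ.filter (fun i => ∀ j : Fin p, k ≤ j.1 → xi j ⬝ᵥ (fun a => U a i) = 0) with hA
  have hsupp : (Finset.univ.filter fun i => (Uᵀ).mulVec β i ≠ 0) ⊆ A := by
    intro i hi
    simp only [Finset.mem_filter, Finset.mem_univ, true_and] at hi
    simp only [hA, Finset.mem_filter, Finset.mem_univ, true_and]
    rcases hdich i with h | h
    · exfalso
      apply hi
      rw [hxval i]
      apply Finset.sum_eq_zero
      intro j _
      by_cases hjk : j.1 < k
      · rw [h j hjk, zero_mul]
      · rw [hβ0 j (by omega), mul_zero]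
    · exact h
  have hcardA : A.card ≤ k := by
    apply card_le_of_orthonormal A
      (fun i => fun m : Fin k => xi ⟨m.1, lt_trans m.2 hkp⟩ ⬝ᵥ (fun a => U a i))
    intro i hi i' hi'
    simp only [hA, Finset.mem_filter, Finset.mem_univ, true_and] at hi hi'
    have hUdot : (fun a => U a i) ⬝ᵥ (fun a => U a i') = if i = i' then (1:ℝ) else 0 := by
      have := congrFun (congrFun hU i) i'
      simpa [Matrix.mul_apply, dotProduct, Matrix.one_apply] using this
    calc ∑ m : Fin k, (xi ⟨m.1, lt_trans m.2 hkp⟩ ⬝ᵥ (fun a => U a i))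
            * (xi ⟨m.1, lt_trans m.2 hkp⟩ ⬝ᵥ (fun a => U a i'))
        = ∑ j ∈ Finset.univ.filter (fun j : Fin p => j.1 < k),
            (xi j ⬝ᵥ (fun a => U a i)) * (xi j ⬝ᵥ (fun a => U a i')) :=
          (sum_filter_lt_eq hkp (fun j => (xi j ⬝ᵥ (fun a => U a i)) * (xi j ⬝ᵥ (fun a => U a i')))).symm
      _ = ∑ j, (xi j ⬝ᵥ (fun a => U a i)) * (xi j ⬝ᵥ (fun a => U a i')) := by
          apply Finset.sum_subset (Finset.subset_univ _)
          intro j _ hj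
          simp only [Finset.mem_filter, Finset.mem_univ, true_and, not_lt] at hj
          rw [hi j hj, zero_mul]
      _ = (fun a => U a i) ⬝ᵥ (fun a => U a i') := (hpar _ _).symm
      _ = if i = i' then (1:ℝ) else 0 := hUdot
  have hpart1 : (Finset.univ.filter fun i => (Uᵀ).mulVec β i ≠ 0).card ≤ k :=
    le_trans (Finset.card_le_card hsupp) hcardA
  refine ⟨hpart1, fun _ => ?_⟩
  exact sparse_l1_div_l2 (fun i => (Uᵀ).mulVec β i) k hpart1
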